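/- arXiv:2511.09782 — 2 statements merged into one kernel-verified Lean document; each statement's English description precedes it below -/
import Mathlib

section
/- Let γ: I → ℝⁿ be an arclength-parametrized curve of order n−1, A(s) = F(s)R(s) the QR-type decomposition of its canonical matrix via the Frenet frame. Then for 1 ≤ i ≤ n−1, the generalized curvatures satisfy κ_i(s) = R_{i+1,i+1}(s) / R_{i,i}(s). -/
open scoped RealInnerProductSpace

/-- The generalized cross product of `n-1` vectors in `ℝⁿ`: its `k`-th component is the
determinant of the matrix whose first `n-1` columns are `v₁, …, v_{n-1}` and whose last
column is the standard basis vector `e_k`. -/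
noncomputable def crossP (n : ℕ) (v : Fin (n - 1) → EuclideanSpace ℝ (Fin n)) :
    EuclideanSpace ℝ (Fin n) :=
  (WithLp.equiv 2 (Fin n → ℝ)).symm fun k =>
    Matrix.det (Matrix.of fun (i j : Fin n) =>
      if h : (j : ℕ) < n - 1 then v ⟨j, h⟩ i else (if i = k then (1:ℝ) else 0))

/-- The family of derivatives `γ', γ'', …, γ^{(n-1)}` at `t`. -/
noncomputable def derivFam (n : ℕ) (γ : ℝ → EuclideanSpace ℝ (Fin n)) (t : ℝ) :
    Fin (n - 1) → EuclideanSpace ℝ (Fin n) :=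
  fun i => iteratedDeriv ((i : ℕ) + 1) γ t

/-- A curve `γ : ℝ → ℝⁿ` has order `n-1` if `γ'(t), …, γ^{(n-1)}(t)` are linearly
independent for all `t`. -/
def HasOrder (n : ℕ) (γ : ℝ → EuclideanSpace ℝ (Fin n)) : Prop :=
  ∀ t : ℝ, LinearIndependent ℝ (derivFam n γ t)

/-- The Frenet frame `T, N₁, …, N_{n-1}` of a curve of order `n-1`: the first `n-1`
vectors are obtained by Gram–Schmidt from `γ', …, γ^{(n-1)}`, and the last one is the
generalized cross product of the first `n-1`. -/
noncomputable def frenetFam (n : ℕ) (γ : ℝ → EuclideanSpace ℝ (Fin n)) (t : ℝ) :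
    Fin n → EuclideanSpace ℝ (Fin n) :=
  have h3 : WellFoundedLT (Fin (n - 1)) := inferInstance
  fun j =>
    if h : (j : ℕ) < n - 1 then
      @InnerProductSpace.gramSchmidtNormed ℝ _ _ _ _ (Fin (n - 1)) _ _ h3 (derivFam n γ t) ⟨j, h⟩
    else crossP n (@InnerProductSpace.gramSchmidtNormed ℝ _ _ _ _ (Fin (n - 1)) _ _ h3 (derivFam n γ t))

/-- The `k`-th Frenet frame vector (`k = 0` is `T`, `k = i` is `Nᵢ`), as a function of
a natural number index. -/
noncomputable def frenetNat (n : ℕ) (γ : ℝ → EuclideanSpace ℝ (Fin n)) (k : ℕ) (t : ℝ) :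
    EuclideanSpace ℝ (Fin n) :=
  if h : k < n then frenetFam n γ t ⟨k, h⟩ else 0

/-- The `i`-th generalized curvature (`1 ≤ i ≤ n-1`) of an arclength-parametrized curve:
`κ₁ = ⟨T', N₁⟩` and `κᵢ = ⟨N_{i-1}', Nᵢ⟩` for `i ≥ 2`. -/
noncomputable def curv (n : ℕ) (γ : ℝ → EuclideanSpace ℝ (Fin n)) (i : ℕ) (s : ℝ) : ℝ :=
  ⟪deriv (fun u => frenetNat n γ (i - 1) u) s, frenetNat n γ i s⟫

/-- The canonical matrix `A(t) = [γ'(t) | ⋯ | γ^{(n)}(t)]`. -/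
noncomputable def canonMat (n : ℕ) (γ : ℝ → EuclideanSpace ℝ (Fin n)) (t : ℝ) :
    Matrix (Fin n) (Fin n) ℝ :=
  Matrix.of fun (i j : Fin n) => iteratedDeriv ((j : ℕ) + 1) γ t i

/-- The frame matrix `F(t) = [T(t) | N₁(t) | ⋯ | N_{n-1}(t)]`. -/
noncomputable def frameMat (n : ℕ) (γ : ℝ → EuclideanSpace ℝ (Fin n)) (t : ℝ) :
    Matrix (Fin n) (Fin n) ℝ :=
  Matrix.of fun (i j : Fin n) => frenetFam n γ t j i

/-- The `k`-th leading principal minor `det M_k(t)` of the Gram matrix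
`B(t) = A(t)ᵀ A(t)`, i.e. the Gram determinant of `γ'(t), …, γ^{(k)}(t)`. -/
noncomputable def gramMinor (n : ℕ) (γ : ℝ → EuclideanSpace ℝ (Fin n)) (k : ℕ) (t : ℝ) :
    ℝ :=
  Matrix.det (Matrix.of fun (p q : Fin k) =>
    ⟪iteratedDeriv ((p : ℕ) + 1) γ t, iteratedDeriv ((q : ℕ) + 1) γ t⟫)


section Aux
open Matrix

variable {n : ℕ}

local notation "E" => EuclideanSpace ℝ (Fin n)

lemma euclid_inner (x y : E) : ⟪x, y⟫ = ∑ i, x i * y i := by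
  simp [PiLp.inner_apply, RCLike.inner_apply, conj_trivial]
  exact Finset.sum_congr rfl fun _ _ => mul_comm _ _

/-- matrix with columns `v` and last column `x` -/
noncomputable def cMat (v : Fin (n - 1) → E) (x : E) : Matrix (Fin n) (Fin n) ℝ :=
  Matrix.of fun i j => if h : (j : ℕ) < n - 1 then v ⟨j, h⟩ i else x i

lemma cMat_eq_updateCol (hn : 2 ≤ n) (v : Fin (n - 1) → E) (x : E) :
    cMat v x = (cMat v 0).updateCol ⟨n - 1, by omega⟩ x := by
  ext i j
  by_cases h : (j : ℕ) < n - 1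
  · have : j ≠ ⟨n - 1, by omega⟩ := by
      intro hh; rw [hh] at h; simp at h
    simp [cMat, Matrix.updateCol_apply, this, h]
  · have hval : (j : ℕ) = n - 1 := by have := j.isLt; omega
    have : j = ⟨n - 1, by omega⟩ := Fin.ext (by simp [hval])
    simp [cMat, Matrix.updateCol_apply, this, h]

lemma inner_crossP (hn : 2 ≤ n) (v : Fin (n - 1) → E) (x : E) :
    ⟪crossP n v, x⟫ = (cMat v x).det := by
  classical
  set lastC : Fin n := ⟨n - 1, by omega⟩
  have hlin : ∀ y : Fin n → ℝ,
      ((cMat v 0).updateCol lastC y).det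
        = ∑ k, y k * ((cMat v 0).updateCol lastC (Pi.single k 1)).det := by
    intro y
    have hy : y = ∑ k, y k • (Pi.single k 1 : Fin n → ℝ) := by
      funext i
      simp [Pi.single_apply, Finset.sum_apply]
    let L : (Fin n → ℝ) →ₗ[ℝ] ℝ :=
      { toFun := fun c => ((cMat v 0).updateCol lastC c).det
        map_add' := fun a b => Matrix.det_updateCol_add _ _ a b
        map_smul' := fun r a => Matrix.det_updateCol_smul _ _ r a }
    have : L y = ∑ k, y k * L (Pi.single k 1) := by
      conv_lhs => rw [hy]
      rw [map_sum]
      refine Finset.sum_congr rfl fun k _ => ?_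
      rw [L.map_smul]; simp
    simpa [L] using this
  have hcomp : ∀ k : Fin n, crossP n v k
      = ((cMat v 0).updateCol lastC (Pi.single k 1)).det := by
    intro k
    rw [← cMat_eq_updateCol hn]
    show Matrix.det _ = Matrix.det _
    congr 1
    ext i j
    by_cases h : (j : ℕ) < n - 1
    · simp [crossP, cMat, h]
    · simp [crossP, cMat, h, Pi.single_apply]
  rw [euclid_inner, cMat_eq_updateCol hn v x, hlin]
  refine Finset.sum_congr rfl fun k _ => ?_
  rw [hcomp k]; ring

lemma inner_crossP_arg (hn : 2 ≤ n) (v : Fin (n - 1) → E) (j : Fin (n - 1)) :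
    ⟪crossP n v, v j⟫ = 0 := by
  rw [inner_crossP hn]
  have hjn : (j : ℕ) < n := by have := j.isLt; omega
  apply Matrix.det_zero_of_column_eq (i := (⟨(j : ℕ), hjn⟩ : Fin n))
    (j := ⟨n - 1, by omega⟩)
  · intro hh
    have := congrArg Fin.val hh
    simp only [Fin.val_mk] at this
    have := j.isLt; omega
  · intro k
    have hj : ((⟨(j : ℕ), hjn⟩ : Fin n) : ℕ) < n - 1 := j.isLt
    simp only [cMat, Matrix.of_apply]
    rw [dif_pos hj, dif_neg (by simp)]

lemma cMat_gram (hn : 2 ≤ n) (v : Fin (n - 1) → E) (hv : Orthonormal ℝ v)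
    (x : E) (hx : ∀ j, ⟪v j, x⟫ = 0) :
    (cMat v x)ᵀ * (cMat v x)
      = Matrix.diagonal (fun j : Fin n =>
          if (j : ℕ) < n - 1 then (1 : ℝ) else ⟪x, x⟫) := by
  classical
  have hON := orthonormal_iff_ite.mp hv
  ext p q
  simp only [Matrix.mul_apply, Matrix.transpose_apply, Matrix.diagonal_apply, cMat,
    Matrix.of_apply]
  by_cases hp : (p : ℕ) < n - 1 <;> by_cases hq : (q : ℕ) < n - 1
  · simp only [dif_pos hp, dif_pos hq]
    have h1 := hON ⟨p, hp⟩ ⟨q, hq⟩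
    rw [euclid_inner] at h1
    rw [h1]
    by_cases hpq : p = q
    · subst hpq; simp [hp]
    · have h2 : (⟨(p:ℕ), hp⟩ : Fin (n-1)) ≠ ⟨(q:ℕ), hq⟩ := by
        intro hh
        exact hpq (Fin.ext (Fin.mk_eq_mk.mp hh))
      rw [if_neg h2, if_neg hpq]
  · have hpq : p ≠ q := fun hh => hq (hh ▸ hp)
    simp only [dif_pos hp, dif_neg hq, if_neg hpq]
    have h1 := hx ⟨p, hp⟩
    rw [euclid_inner] at h1
    exact h1
  · have hpq : p ≠ q := fun hh => hp (hh ▸ hq)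
    simp only [dif_neg hp, dif_pos hq, if_neg hpq]
    have h1 := hx ⟨q, hq⟩
    rw [euclid_inner] at h1
    rw [← h1]
    exact Finset.sum_congr rfl fun i _ => mul_comm _ _
  · have hpv : (p : ℕ) = n - 1 := by have := p.isLt; omega
    have hqv : (q : ℕ) = n - 1 := by have := q.isLt; omega
    have hpq : p = q := Fin.ext (by omega)
    subst hpq
    simp [hp]
    rw [← real_inner_self_eq_norm_sq, euclid_inner]

lemma det_cMat_sq (hn : 2 ≤ n) (v : Fin (n - 1) → E) (hv : Orthonormal ℝ v)
    (x : E) (hx : ∀ j, ⟪v j, x⟫ = 0) :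
    ((cMat v x).det) ^ 2 = ⟪x, x⟫ := by
  classical
  have h1 : ((cMat v x)ᵀ * (cMat v x)).det = ((cMat v x).det) ^ 2 := by
    rw [Matrix.det_mul, Matrix.det_transpose]; ring
  rw [cMat_gram hn v hv x hx, Matrix.det_diagonal] at h1
  rw [← h1]
  have hlast : ∀ j : Fin n, (if (j : ℕ) < n - 1 then (1:ℝ) else ⟪x,x⟫)
      = if j = ⟨n-1, by omega⟩ then ⟪x,x⟫ else 1 := by
    intro j
    by_cases h : (j : ℕ) < n - 1
    · rw [if_pos h, if_neg]; intro hh; rw [hh] at h; simp at h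
    · have : j = ⟨n-1, by omega⟩ := Fin.ext (by have := j.isLt; simp; omega)
      rw [if_neg h, if_pos this]
  simp only [hlast]
  rw [Finset.prod_ite_eq' Finset.univ (⟨n-1, by omega⟩ : Fin n) (fun _ => ⟪x,x⟫)]
  simp

lemma inner_self_crossP (hn : 2 ≤ n) (v : Fin (n - 1) → E) (hv : Orthonormal ℝ v) :
    ⟪crossP n v, crossP n v⟫ = 1 := by
  classical
  set c := crossP n v with hc
  have hxc : ∀ j, ⟪v j, c⟫ = 0 := fun j => by
    rw [real_inner_comm]; exact inner_crossP_arg hn v j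
  have hdet2 : ((cMat v c).det) ^ 2 = ⟪c, c⟫ := det_cMat_sq hn v hv c hxc
  have hdetc : (cMat v c).det = ⟪c, c⟫ := by rw [← inner_crossP hn]
  have hcc : ⟪c, c⟫ * ⟪c, c⟫ = ⟪c, c⟫ := by
    have := hdet2; rw [hdetc] at this
    nlinarith [this]
  have h01 : ⟪c, c⟫ = 0 ∨ ⟪c, c⟫ = 1 := by
    have hz : ⟪c, c⟫ * (⟪c, c⟫ - 1) = 0 := by
      rw [mul_sub, hcc, mul_one, sub_self]
    rcases mul_eq_zero.mp hz with h | h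
    · exact Or.inl h
    · exact Or.inr (by linarith)
  rcases h01 with h0 | h1
  · exfalso
    have hczero : c = 0 := (inner_self_eq_zero (𝕜 := ℝ)).mp h0
    -- find a unit vector orthogonal to all v j
    set K : Submodule ℝ E := Submodule.span ℝ (Set.range v) with hK
    have hKne : K ≠ ⊤ := by
      intro htop
      have hle := finrank_span_le_card (R := ℝ) (Set.range v)
      have hcard : (Set.range v).toFinset.card ≤ n - 1 := by
        rw [Set.toFinset_range]
        exact le_trans Finset.card_image_le (by simp)
      rw [← hK] at hle
      have hfr : Module.finrank ℝ K = n := by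
        rw [htop, finrank_top, finrank_euclideanSpace_fin]
      omega
    have hbot : Kᗮ ≠ ⊥ := by
      rw [Ne, Submodule.orthogonal_eq_bot_iff]
      exact hKne
    obtain ⟨x, hxK, hx0⟩ := Submodule.ne_bot_iff _ |>.mp hbot
    set u : E := ‖x‖⁻¹ • x with hu
    have hvu : ∀ j, ⟪v j, u⟫ = 0 := by
      intro j
      have hj : v j ∈ K := Submodule.subset_span ⟨j, rfl⟩
      have := (Submodule.mem_orthogonal K x).mp hxK (v j) hj
      rw [hu, real_inner_smul_right, this, mul_zero]
    have huu : ⟪u, u⟫ = 1 := by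
      rw [real_inner_self_eq_norm_sq, hu, norm_smul]
      have hxn : ‖x‖ ≠ 0 := norm_ne_zero_iff.mpr hx0
      rw [norm_inv, norm_norm]
      field_simp
    have hdu : ((cMat v u).det) ^ 2 = 1 := by
      rw [det_cMat_sq hn v hv u hvu, huu]
    have hdu0 : (cMat v u).det = 0 := by
      rw [← inner_crossP hn, ← hc, hczero, inner_zero_left]
    rw [hdu0] at hdu
    norm_num at hdu
  · exact h1

abbrev WFI (n : ℕ) : WellFoundedLT (Fin (n - 1)) := inferInstance

/-- unnormalized Gram-Schmidt family of the derivative family -/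
noncomputable def gsU (n : ℕ) (γ : ℝ → EuclideanSpace ℝ (Fin n)) (t : ℝ) :
    Fin (n - 1) → EuclideanSpace ℝ (Fin n) :=
  @InnerProductSpace.gramSchmidt ℝ _ _ _ _ (Fin (n - 1)) _ _ (WFI n) (derivFam n γ t)

/-- normalized Gram-Schmidt family of the derivative family -/
noncomputable def gsN (n : ℕ) (γ : ℝ → EuclideanSpace ℝ (Fin n)) (t : ℝ) :
    Fin (n - 1) → EuclideanSpace ℝ (Fin n) :=
  @InnerProductSpace.gramSchmidtNormed ℝ _ _ _ _ (Fin (n - 1)) _ _ (WFI n) (derivFam n γ t)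

variable (γ : ℝ → EuclideanSpace ℝ (Fin n))

lemma gsN_eq (t : ℝ) (k : Fin (n - 1)) :
    gsN n γ t k = ‖gsU n γ t k‖⁻¹ • gsU n γ t k := by
  simp only [gsN, gsU, InnerProductSpace.gramSchmidtNormed, RCLike.ofReal_real_eq_id, id_eq]

lemma frenetFam_lt (t : ℝ) (j : Fin n) (h : (j : ℕ) < n - 1) :
    frenetFam n γ t j = gsN n γ t ⟨j, h⟩ := by
  simp only [frenetFam]
  rw [dif_pos h]
  rfl

lemma frenetFam_last (t : ℝ) (j : Fin n) (h : ¬ (j : ℕ) < n - 1) :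
    frenetFam n γ t j = crossP n (gsN n γ t) := by
  simp only [frenetFam]
  rw [dif_neg h]
  rfl

lemma gsN_orthonormal (horder : HasOrder n γ) (t : ℝ) : Orthonormal ℝ (gsN n γ t) := by
  exact @InnerProductSpace.gramSchmidtNormed_orthonormal ℝ _ _ _ _ (Fin (n - 1)) _ _ (WFI n) _ (horder t)

lemma gsU_ne_zero (horder : HasOrder n γ) (t : ℝ) (k : Fin (n - 1)) :
    gsU n γ t k ≠ 0 := by
  exact @InnerProductSpace.gramSchmidt_ne_zero ℝ _ _ _ _ (Fin (n - 1)) _ _ (WFI n) _ k (horder t)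

lemma gsU_orthogonal (t : ℝ) {a b : Fin (n - 1)} (h : a ≠ b) :
    ⟪gsU n γ t a, gsU n γ t b⟫ = 0 := by
  exact @InnerProductSpace.gramSchmidt_orthogonal ℝ _ _ _ _ (Fin (n - 1)) _ _ (WFI n) (derivFam n γ t) _ _ h

lemma gsU_mem_span (t : ℝ) {j i : Fin (n - 1)} (h : i ≤ j) :
    gsU n γ t i ∈ Submodule.span ℝ (derivFam n γ t '' Set.Iic j) := by
  exact @InnerProductSpace.gramSchmidt_mem_span ℝ _ _ _ _ (Fin (n - 1)) _ _ (WFI n) (derivFam n γ t) _ _ h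

lemma gsU_def' (t : ℝ) (j : Fin (n - 1)) :
    derivFam n γ t j = gsU n γ t j + ∑ k ∈ Finset.Iio j,
      (⟪gsU n γ t k, derivFam n γ t j⟫ / ‖gsU n γ t k‖ ^ 2) • gsU n γ t k := by
  have h := @InnerProductSpace.gramSchmidt_def'' ℝ _ _ _ _ (Fin (n - 1)) _ _ (WFI n) (derivFam n γ t) j
  simpa [gsU, RCLike.ofReal_real_eq_id] using h

lemma frenetFam_orthonormal (hn : 2 ≤ n) (horder : HasOrder n γ) (t : ℝ) :
    ∀ p q : Fin n, ⟪frenetFam n γ t p, frenetFam n γ t q⟫ = if p = q then 1 else 0 := by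
  intro p q
  have hON : Orthonormal ℝ (gsN n γ t) := gsN_orthonormal γ horder t
  have hONite := orthonormal_iff_ite.mp hON
  by_cases hp : (p : ℕ) < n - 1 <;> by_cases hq : (q : ℕ) < n - 1
  · rw [frenetFam_lt γ t p hp, frenetFam_lt γ t q hq, hONite]
    by_cases hpq : p = q
    · subst hpq; simp
    · rw [if_neg (fun hh => hpq (Fin.ext (Fin.mk_eq_mk.mp hh))), if_neg hpq]
  · have hpq : p ≠ q := fun hh => hq (hh ▸ hp)
    rw [frenetFam_lt γ t p hp, frenetFam_last γ t q hq, if_neg hpq, real_inner_comm]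
    exact inner_crossP_arg hn _ ⟨p, hp⟩
  · have hpq : p ≠ q := fun hh => hp (hh ▸ hq)
    rw [frenetFam_last γ t p hp, frenetFam_lt γ t q hq, if_neg hpq]
    exact inner_crossP_arg hn _ ⟨q, hq⟩
  · have hpq : p = q := Fin.ext (by have := p.isLt; have := q.isLt; omega)
    subst hpq
    rw [frenetFam_last γ t p hp, if_pos rfl]
    exact inner_self_crossP hn _ hON

lemma hasDerivAt_iter (hγ : ContDiff ℝ (⊤ : ℕ∞) γ) (k : ℕ) (t : ℝ) :
    HasDerivAt (iteratedDeriv k γ) (iteratedDeriv (k + 1) γ t) t := by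
  rw [iteratedDeriv_succ]
  exact ((hγ.differentiable_iteratedDeriv k (WithTop.coe_lt_coe.mpr (ENat.coe_lt_top k))) t).hasDerivAt

lemma gs_hasDerivAt (hγ : ContDiff ℝ (⊤ : ℕ∞) γ) (horder : HasOrder n γ) :
    ∀ m : ℕ, ∀ j : Fin (n - 1), (j : ℕ) < m →
      Differentiable ℝ (fun u => gsU n γ u j) ∧
      ∀ s : ℝ, deriv (fun u => gsU n γ u j) s ∈
        Submodule.span ℝ ((fun m : ℕ => iteratedDeriv (m + 1) γ s) ''
          (Set.Iio ((j : ℕ) + 2))) := by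
  intro m
  induction m with
  | zero => exact fun j hj => absurd hj (by omega)
  | succ m IH =>
    intro j hj
    by_cases hjm : (j : ℕ) < m
    · exact IH j hjm
    have hjeq : (j : ℕ) = m := by omega
    have hne : ∀ (u : ℝ) (k : Fin (n - 1)), gsU n γ u k ≠ 0 := gsU_ne_zero γ horder
    have hdef : (fun u => gsU n γ u j)
        = fun u => iteratedDeriv ((j : ℕ) + 1) γ u
          - ∑ k ∈ Finset.Iio j,
              (⟪gsU n γ u k, iteratedDeriv ((j : ℕ) + 1) γ u⟫
                / ⟪gsU n γ u k, gsU n γ u k⟫) • gsU n γ u k := by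
      funext u
      have h1 := gsU_def' γ u j
      have h2 : derivFam n γ u j = iteratedDeriv ((j : ℕ) + 1) γ u := rfl
      rw [h2] at h1
      have hsum : ∑ k ∈ Finset.Iio j,
            (⟪gsU n γ u k, iteratedDeriv ((j : ℕ) + 1) γ u⟫
              / ⟪gsU n γ u k, gsU n γ u k⟫) • gsU n γ u k
          = ∑ k ∈ Finset.Iio j,
            (⟪gsU n γ u k, iteratedDeriv ((j : ℕ) + 1) γ u⟫
              / ‖gsU n γ u k‖ ^ 2) • gsU n γ u k := by
        refine Finset.sum_congr rfl fun k _ => ?_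
        rw [real_inner_self_eq_norm_sq]
      rw [hsum, eq_sub_iff_add_eq', add_comm]
      exact h1.symm
    have key : ∀ s : ℝ, ∃ D, HasDerivAt (fun u => gsU n γ u j) D s ∧
        D ∈ Submodule.span ℝ ((fun m : ℕ => iteratedDeriv (m + 1) γ s) ''
          (Set.Iio ((j : ℕ) + 2))) := by
      intro s
      have hdiffg : ∀ k : Fin (n - 1), k < j →
          Differentiable ℝ (fun u => gsU n γ u k) := by
        intro k hk
        exact (IH k (by rw [Fin.lt_def] at hk; omega)).1
      have hiterd : ∀ l : ℕ, Differentiable ℝ (iteratedDeriv l γ) :=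
        fun l t => (hasDerivAt_iter γ hγ l t).differentiableAt
      have hterm : ∀ k ∈ Finset.Iio j,
          HasDerivAt (fun u =>
            (⟪gsU n γ u k, iteratedDeriv ((j : ℕ) + 1) γ u⟫
              / ⟪gsU n γ u k, gsU n γ u k⟫) • gsU n γ u k)
            ((⟪gsU n γ s k, iteratedDeriv ((j : ℕ) + 1) γ s⟫
              / ⟪gsU n γ s k, gsU n γ s k⟫) • deriv (fun u => gsU n γ u k) s
             + deriv (fun u =>
                ⟪gsU n γ u k, iteratedDeriv ((j : ℕ) + 1) γ u⟫
                / ⟪gsU n γ u k, gsU n γ u k⟫) s • gsU n γ s k) s := by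
        intro k hk
        have hk' : k < j := Finset.mem_Iio.mp hk
        have hgk := hdiffg k hk'
        have hcd : DifferentiableAt ℝ (fun u =>
            ⟪gsU n γ u k, iteratedDeriv ((j : ℕ) + 1) γ u⟫
            / ⟪gsU n γ u k, gsU n γ u k⟫) s := by
          refine DifferentiableAt.div ?_ ?_ ?_
          · exact (hgk s).inner ℝ ((hiterd _) s)
          · exact (hgk s).inner ℝ (hgk s)
          · exact inner_self_ne_zero.mpr (hne s k)
        exact hcd.hasDerivAt.smul (hgk s).hasDerivAt
      have hmain : HasDerivAt (fun u => iteratedDeriv ((j : ℕ) + 1) γ u)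
          (iteratedDeriv ((j : ℕ) + 2) γ s) s := hasDerivAt_iter γ hγ _ s
      refine ⟨iteratedDeriv ((j : ℕ) + 2) γ s - ∑ k ∈ Finset.Iio j,
          ((⟪gsU n γ s k, iteratedDeriv ((j : ℕ) + 1) γ s⟫
            / ⟪gsU n γ s k, gsU n γ s k⟫) • deriv (fun u => gsU n γ u k) s
           + deriv (fun u => ⟪gsU n γ u k, iteratedDeriv ((j : ℕ) + 1) γ u⟫
              / ⟪gsU n γ u k, gsU n γ u k⟫) s • gsU n γ s k), ?_, ?_⟩
      · rw [hdef]
        exact hmain.sub (HasDerivAt.fun_sum hterm)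
      · refine Submodule.sub_mem _ ?_ (Submodule.sum_mem _ fun k hk => ?_)
        · exact Submodule.subset_span ⟨(j : ℕ) + 1, by simp, rfl⟩
        · have hk' : k < j := Finset.mem_Iio.mp hk
          have hkj : (k : ℕ) < (j : ℕ) := by rwa [Fin.lt_def] at hk'
          refine Submodule.add_mem _ (Submodule.smul_mem _ _ ?_) (Submodule.smul_mem _ _ ?_)
          · have := (IH k (by omega)).2 s
            refine Submodule.span_mono (Set.image_mono ?_) this
            exact Set.Iio_subset_Iio (by omega)
          · have hmem := gsU_mem_span γ s (le_refl k)
            refine Submodule.span_le.mpr ?_ hmem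
            rintro x ⟨l, hl, rfl⟩
            refine Submodule.subset_span ⟨(l : ℕ), ?_, rfl⟩
            have hlk : (l : ℕ) ≤ (k : ℕ) := hl
            simp only [Set.mem_Iio]
            omega
    constructor
    · intro s
      obtain ⟨D, hD, _⟩ := key s
      exact hD.differentiableAt
    · intro s
      obtain ⟨D, hD, hDm⟩ := key s
      rwa [hD.deriv]

lemma inner_gsU_self (t : ℝ) (j : Fin (n - 1)) :
    ⟪gsU n γ t j, derivFam n γ t j⟫ = ‖gsU n γ t j‖ ^ 2 := by
  conv_lhs => rw [gsU_def' γ t j]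
  rw [inner_add_right, inner_sum, real_inner_self_eq_norm_sq]
  have hz : ∀ k ∈ Finset.Iio j,
      ⟪gsU n γ t j, (⟪gsU n γ t k, derivFam n γ t j⟫ / ‖gsU n γ t k‖ ^ 2)
        • gsU n γ t k⟫ = 0 := by
    intro k hk
    have hkj : j ≠ k := (ne_of_lt (Finset.mem_Iio.mp hk)).symm
    rw [real_inner_smul_right, gsU_orthogonal γ t hkj, mul_zero]
  rw [Finset.sum_eq_zero hz, add_zero]

lemma gsU_formula (j : Fin (n - 1)) :
    (fun u => gsU n γ u j)
      = fun u => iteratedDeriv ((j : ℕ) + 1) γ u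
        - ∑ k ∈ Finset.Iio j,
            (⟪gsU n γ u k, iteratedDeriv ((j : ℕ) + 1) γ u⟫
              / ⟪gsU n γ u k, gsU n γ u k⟫) • gsU n γ u k := by
  funext u
  have h1 := gsU_def' γ u j
  have h2 : derivFam n γ u j = iteratedDeriv ((j : ℕ) + 1) γ u := rfl
  rw [h2] at h1
  have hsum : ∑ k ∈ Finset.Iio j,
        (⟪gsU n γ u k, iteratedDeriv ((j : ℕ) + 1) γ u⟫
          / ⟪gsU n γ u k, gsU n γ u k⟫) • gsU n γ u k
      = ∑ k ∈ Finset.Iio j,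
        (⟪gsU n γ u k, iteratedDeriv ((j : ℕ) + 1) γ u⟫
          / ‖gsU n γ u k‖ ^ 2) • gsU n γ u k := by
    refine Finset.sum_congr rfl fun k _ => ?_
    rw [real_inner_self_eq_norm_sq]
  rw [hsum, eq_sub_iff_add_eq', add_comm]
  exact h1.symm

end Aux

set_option maxHeartbeats 1000000 in
open Matrix in
lemma frameMat_orth {n : ℕ} (γ : ℝ → EuclideanSpace ℝ (Fin n)) (hn : 2 ≤ n)
    (horder : HasOrder n γ) (s : ℝ) :
    (frameMat n γ s)ᵀ * frameMat n γ s = 1 := by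
  ext p q
  have h := frenetFam_orthonormal γ hn horder s p q
  rw [euclid_inner] at h
  simpa [Matrix.mul_apply, frameMat, Matrix.one_apply] using h


set_option maxHeartbeats 1000000 in
/-- For an arclength-parametrized curve of order `n-1` with QR-type decomposition
`A(s) = F(s) R(s)`, the generalized curvatures satisfy
`κᵢ = R_{i+1,i+1} / R_{i,i}` for `1 ≤ i ≤ n-1`. -/
theorem curv_eq_ratio_diag_R (n : ℕ) (hn : 2 ≤ n) (γ : ℝ → EuclideanSpace ℝ (Fin n))
    (hγ : ContDiff ℝ (⊤ : ℕ∞) γ) (harc : ∀ s : ℝ, ‖deriv γ s‖ = 1) (horder : HasOrder n γ)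
    (s : ℝ) (R : Matrix (Fin n) (Fin n) ℝ)
    (hupper : ∀ i j : Fin n, j < i → R i j = 0)
    (hQR : canonMat n γ s = frameMat n γ s * R) :
    ∀ i : ℕ, 1 ≤ i → (hi : i ≤ n - 1) →
      curv n γ i s =
        R ⟨i, by omega⟩ ⟨i, by omega⟩ / R ⟨i - 1, by omega⟩ ⟨i - 1, by omega⟩ := by
  intro i h1i hi
  have hFtF := frameMat_orth γ hn horder s
  have hRe : ∀ j k : Fin n, R j k = ⟪frenetFam n γ s j, iteratedDeriv ((k : ℕ) + 1) γ s⟫ := by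
    intro j k
    have h2 : (frameMat n γ s).transpose * canonMat n γ s = R := by
      rw [hQR, ← Matrix.mul_assoc, hFtF, Matrix.one_mul]
    have h3 : ((frameMat n γ s).transpose * canonMat n γ s) j k = R j k := by rw [h2]
    rw [← h3, euclid_inner]
    simp [Matrix.mul_apply, frameMat, canonMat]
  set iF : Fin n := ⟨i, by omega⟩ with hiF
  set i'F : Fin n := ⟨i - 1, by omega⟩ with hi'F
  set N : EuclideanSpace ℝ (Fin n) := frenetFam n γ s iF with hN
  set i' : Fin (n - 1) := ⟨i - 1, by omega⟩ with hi'
  have hiv : (iF : ℕ) = i := rfl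
  have hi'v : (i' : ℕ) = i - 1 := rfl
  show curv n γ i s = R iF iF / R i'F i'F
  -- orthogonality of N to lower derivatives
  have horthN : ∀ m : ℕ, m < i → ⟪iteratedDeriv (m + 1) γ s, N⟫ = 0 := by
    intro m hm
    have hmn : m < n := by omega
    have h4 := hRe iF ⟨m, hmn⟩
    have hz : R iF ⟨m, hmn⟩ = 0 :=
      hupper iF ⟨m, hmn⟩ (by rw [Fin.lt_def]; simpa using hm)
    rw [hz] at h4
    rw [real_inner_comm]
    exact h4.symm
  have hspanorth : ∀ (T : Set (EuclideanSpace ℝ (Fin n))),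
      (∀ x ∈ T, ⟪x, N⟫ = 0) → ∀ x ∈ Submodule.span ℝ T, ⟪x, N⟫ = 0 := by
    intro T hT x hx
    have hle : Submodule.span ℝ T ≤ (ℝ ∙ N)ᗮ :=
      Submodule.span_le.mpr fun y hy =>
        Submodule.mem_orthogonal_singleton_iff_inner_left.mpr (hT y hy)
    exact Submodule.mem_orthogonal_singleton_iff_inner_left.mp (hle hx)
  have hgN : ∀ k : Fin (n - 1), (k : ℕ) < i → ⟪gsU n γ s k, N⟫ = 0 := by
    intro k hk
    refine hspanorth _ ?_ _ (gsU_mem_span γ s (le_refl k))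
    rintro x ⟨l, hl, rfl⟩
    have hlk : (l : ℕ) ≤ (k : ℕ) := hl
    exact horthN (l : ℕ) (by omega)
  have hDN : ∀ k : Fin (n - 1), (k : ℕ) + 2 ≤ i →
      ⟪deriv (fun u => gsU n γ u k) s, N⟫ = 0 := by
    intro k hk
    have hmem := (gs_hasDerivAt γ hγ horder ((k : ℕ) + 1) k (by omega)).2 s
    refine hspanorth _ ?_ _ hmem
    rintro x ⟨m, hm, rfl⟩
    have hm' : m < (k : ℕ) + 2 := hm
    exact horthN m (by omega)
  have hgdiff : Differentiable ℝ (fun u => gsU n γ u i') :=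
    (gs_hasDerivAt γ hγ horder ((i' : ℕ) + 1) i' (by omega)).1
  have hiterd : ∀ l : ℕ, Differentiable ℝ (iteratedDeriv l γ) :=
    fun l t => (hasDerivAt_iter γ hγ l t).differentiableAt
  have hne : gsU n γ s i' ≠ 0 := gsU_ne_zero γ horder s i'
  have hnrm : ‖gsU n γ s i'‖ ≠ 0 := norm_ne_zero_iff.mpr hne
  -- derivative of ψ u = ⟪g u, N⟫
  have hψ : HasDerivAt (fun u => ⟪gsU n γ u i', N⟫) (R iF iF) s := by
    have hterm : ∀ k ∈ Finset.Iio i',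
        HasDerivAt (fun u =>
          ⟪gsU n γ u i', N⟫) 0 s → True := fun _ _ _ => trivial
    -- expand the function
    have hfun : (fun u => ⟪gsU n γ u i', N⟫)
        = fun u => ⟪iteratedDeriv ((i' : ℕ) + 1) γ u, N⟫
          - ∑ k ∈ Finset.Iio i',
              (⟪gsU n γ u k, iteratedDeriv ((i' : ℕ) + 1) γ u⟫
                / ⟪gsU n γ u k, gsU n γ u k⟫) * ⟪gsU n γ u k, N⟫ := by
      funext u
      rw [show gsU n γ u i' = (fun u => gsU n γ u i') u from rfl, gsU_formula]
      rw [inner_sub_left, sum_inner]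
      congr 1
      exact Finset.sum_congr rfl fun k _ => real_inner_smul_left _ _ _
    rw [hfun]
    have hA : HasDerivAt (fun u => ⟪iteratedDeriv ((i' : ℕ) + 1) γ u, N⟫)
        (⟪iteratedDeriv ((i' : ℕ) + 2) γ s, N⟫) s := by
      have := HasDerivAt.inner ℝ (hasDerivAt_iter γ hγ ((i' : ℕ) + 1) s)
        (hasDerivAt_const s N)
      simpa using this
    have hB : ∀ k ∈ Finset.Iio i',
        HasDerivAt (fun u =>
          (⟪gsU n γ u k, iteratedDeriv ((i' : ℕ) + 1) γ u⟫
            / ⟪gsU n γ u k, gsU n γ u k⟫) * ⟪gsU n γ u k, N⟫) 0 s := by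
      intro k hk
      have hk0 : k < i' := Finset.mem_Iio.mp hk
      have hk' : (k : ℕ) < (i' : ℕ) := Fin.lt_def.mp hk0
      have hgk : Differentiable ℝ (fun u => gsU n γ u k) :=
        (gs_hasDerivAt γ hγ horder ((k : ℕ) + 1) k (by omega)).1
      have hc : DifferentiableAt ℝ (fun u =>
          ⟪gsU n γ u k, iteratedDeriv ((i' : ℕ) + 1) γ u⟫
          / ⟪gsU n γ u k, gsU n γ u k⟫) s := by
        refine DifferentiableAt.div ?_ ?_ ?_
        · exact (hgk s).inner ℝ ((hiterd _) s)
        · exact (hgk s).inner ℝ (hgk s)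
        · exact inner_self_ne_zero.mpr (gsU_ne_zero γ horder s k)
      have hh : HasDerivAt (fun u => ⟪gsU n γ u k, N⟫)
          (⟪gsU n γ s k, (0 : EuclideanSpace ℝ (Fin n))⟫
            + ⟪deriv (fun u => gsU n γ u k) s, N⟫) s :=
        HasDerivAt.inner ℝ (hgk s).hasDerivAt (hasDerivAt_const s N)
      have hmul := hc.hasDerivAt.mul hh
      have hz1 : ⟪gsU n γ s k, N⟫ = 0 := hgN k (by omega)
      have hz2 : ⟪deriv (fun u => gsU n γ u k) s, N⟫ = 0 := hDN k (by omega)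
      have : deriv (fun u =>
              ⟪gsU n γ u k, iteratedDeriv ((i' : ℕ) + 1) γ u⟫
              / ⟪gsU n γ u k, gsU n γ u k⟫) s * ⟪gsU n γ s k, N⟫
          + (⟪gsU n γ s k, iteratedDeriv ((i' : ℕ) + 1) γ s⟫
            / ⟪gsU n γ s k, gsU n γ s k⟫)
            * (⟪gsU n γ s k, (0 : EuclideanSpace ℝ (Fin n))⟫
              + ⟪deriv (fun u => gsU n γ u k) s, N⟫) = 0 := by
        rw [hz1, hz2, inner_zero_right]
        ring
      rwa [this] at hmul
    have hsum : HasDerivAt (fun u => ∑ k ∈ Finset.Iio i',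
        (⟪gsU n γ u k, iteratedDeriv ((i' : ℕ) + 1) γ u⟫
          / ⟪gsU n γ u k, gsU n γ u k⟫) * ⟪gsU n γ u k, N⟫)
        (∑ k ∈ Finset.Iio i', (0 : ℝ)) s := HasDerivAt.fun_sum hB
    have htot := hA.sub hsum
    have hval : ⟪iteratedDeriv ((i' : ℕ) + 2) γ s, N⟫ - ∑ k ∈ Finset.Iio i', (0 : ℝ)
        = R iF iF := by
      rw [Finset.sum_const_zero, sub_zero]
      have hidx : (i' : ℕ) + 2 = i + 1 := by omega
      rw [hidx, real_inner_comm]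
      exact (hRe iF iF).symm
    rwa [hval] at htot
  -- the frame vector as a function
  have hfun2 : (fun u => frenetNat n γ (i - 1) u)
      = fun u => ‖gsU n γ u i'‖⁻¹ • gsU n γ u i' := by
    funext u
    rw [frenetNat, dif_pos (show i - 1 < n by omega)]
    rw [frenetFam_lt γ u ⟨i - 1, by omega⟩ (by simpa using (by omega : i - 1 < n - 1))]
    rw [gsN_eq]
  have hinv : DifferentiableAt ℝ (fun u => ‖gsU n γ u i'‖⁻¹) s := by
    refine DifferentiableAt.inv ?_ hnrm
    exact (hgdiff s).norm ℝ hne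
  have hD : HasDerivAt (fun u => ‖gsU n γ u i'‖⁻¹ • gsU n γ u i')
      (‖gsU n γ s i'‖⁻¹ • deriv (fun u => gsU n γ u i') s
        + deriv (fun u => ‖gsU n γ u i'‖⁻¹) s • gsU n γ s i') s :=
    hinv.hasDerivAt.smul (hgdiff s).hasDerivAt
  -- compute curv
  have hcurv : curv n γ i s = ‖gsU n γ s i'‖⁻¹ * R iF iF := by
    have hNi : frenetNat n γ i s = N := by
      rw [frenetNat, dif_pos (show i < n by omega)]
    rw [curv, hNi, hfun2, hD.deriv]
    rw [inner_add_left, real_inner_smul_left, real_inner_smul_left]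
    have hz1 : ⟪gsU n γ s i', N⟫ = 0 := hgN i' (by omega)
    have hz2 : ⟪deriv (fun u => gsU n γ u i') s, N⟫ = R iF iF := by
      have hh : HasDerivAt (fun u => ⟪gsU n γ u i', N⟫)
          (⟪gsU n γ s i', (0 : EuclideanSpace ℝ (Fin n))⟫
            + ⟪deriv (fun u => gsU n γ u i') s, N⟫) s :=
        HasDerivAt.inner ℝ (hgdiff s).hasDerivAt (hasDerivAt_const s N)
      have := hψ.unique hh
      rw [inner_zero_right, zero_add] at this
      exact this.symm
    rw [hz1, hz2, mul_zero, add_zero]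
  -- compute R i-1 i-1
  have hRdiag : R i'F i'F = ‖gsU n γ s i'‖ := by
    rw [hRe i'F i'F]
    have h5 : frenetFam n γ s i'F = gsN n γ s i' := by
      rw [frenetFam_lt γ s i'F (by simpa using (by omega : i - 1 < n - 1))]
    rw [h5, gsN_eq, real_inner_smul_left]
    have h6 : ⟪gsU n γ s i', iteratedDeriv ((i'F : ℕ) + 1) γ s⟫
        = ‖gsU n γ s i'‖ ^ 2 := inner_gsU_self γ s i'
    rw [h6, pow_two, ← mul_assoc, inv_mul_cancel₀ hnrm, one_mul]
  rw [hcurv, hRdiag, div_eq_inv_mul]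
end

section
/- Let n ≥ 3 and let γ: I → ℝⁿ be a parametrized curve of order n−1. Then the first generalized curvature satisfies κ₁(t) = sqrt(det M₂(t)) / ‖γ'(t)‖³, where M₂(t) is the 2×2 matrix with entries ⟨γ^{(i)}(t), γ^{(j)}(t)⟩ for i, j ∈ {1,2}. -/
open scoped RealInnerProductSpace

section Aux

variable {E : Type*} [NormedAddCommGroup E] [InnerProductSpace ℝ E]

lemma aux_gs_zero {m : ℕ} (f : Fin m → E) (h : 0 < m) :
    @InnerProductSpace.gramSchmidt ℝ E _ _ _ (Fin m) _ _ (inferInstance : WellFoundedLT (Fin m)) f ⟨0, h⟩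
      = f ⟨0, h⟩ := by
  rw [InnerProductSpace.gramSchmidt_def]
  have : Finset.Iio (⟨0, h⟩ : Fin m) = ∅ := by
    ext i; simp [Fin.lt_def]
  rw [this, Finset.sum_empty, sub_zero]

lemma aux_gs_one {m : ℕ} (f : Fin m → E) (h : 1 < m)
    (horth : ⟪f ⟨0, by omega⟩, f ⟨1, h⟩⟫ = 0) :
    @InnerProductSpace.gramSchmidt ℝ E _ _ _ (Fin m) _ _ (inferInstance : WellFoundedLT (Fin m)) f ⟨1, h⟩
      = f ⟨1, h⟩ := by
  rw [InnerProductSpace.gramSchmidt_def]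
  have : Finset.Iio (⟨1, h⟩ : Fin m) = {⟨0, by omega⟩} := by
    ext i; simp [Fin.lt_def, Fin.ext_iff]
  rw [this, Finset.sum_singleton, aux_gs_zero f (by omega), Submodule.starProjection_singleton]
  rw [horth]
  simp

/-- For a unit-speed curve, `⟪γ'(u), γ''(u)⟫ = 0`. -/
lemma aux_orth {γt : ℝ → E} (hγt : ContDiff ℝ (⊤ : ℕ∞) γt)
    (hunit : ∀ u : ℝ, ‖deriv γt u‖ = 1) (u : ℝ) :
    ⟪deriv γt u, deriv (deriv γt) u⟫ = 0 := by
  have hd : Differentiable ℝ (deriv γt) :=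
    ((contDiff_infty_iff_deriv.mp (hγt.of_le (by simp))).2).differentiable (by simp)
  have h1 : HasDerivAt (deriv γt) (deriv (deriv γt) u) u := (hd u).hasDerivAt
  have h2 : HasDerivAt (fun v => ⟪deriv γt v, deriv γt v⟫)
      (⟪deriv γt u, deriv (deriv γt) u⟫ + ⟪deriv (deriv γt) u, deriv γt u⟫) u :=
    h1.inner ℝ h1
  have h3 : (fun v => ⟪deriv γt v, deriv γt v⟫) = fun _ : ℝ => (1 : ℝ) := by
    funext v
    rw [real_inner_self_eq_norm_mul_norm, hunit v]; norm_num
  rw [h3] at h2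
  have h4 := h2.unique (hasDerivAt_const u 1)
  have h5 : (inner ℝ (deriv (deriv γt) u) (deriv γt u) : ℝ)
      = inner ℝ (deriv γt u) (deriv (deriv γt) u) := real_inner_comm _ _
  linarith

end Aux

lemma aux_derivFam_zero {n : ℕ} (hn : 3 ≤ n) (γ : ℝ → EuclideanSpace ℝ (Fin n)) (u : ℝ) :
    derivFam n γ u ⟨0, by omega⟩ = deriv γ u := by
  simp [derivFam, iteratedDeriv_one]

lemma aux_derivFam_one {n : ℕ} (hn : 3 ≤ n) (γ : ℝ → EuclideanSpace ℝ (Fin n)) (u : ℝ) :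
    derivFam n γ u ⟨1, by omega⟩ = deriv (deriv γ) u := by
  simp [derivFam, iteratedDeriv_succ, iteratedDeriv_one]

lemma aux_frenetNat_zero {n : ℕ} (hn : 3 ≤ n) (γt : ℝ → EuclideanSpace ℝ (Fin n))
    (hunit : ∀ u : ℝ, ‖deriv γt u‖ = 1) (u : ℝ) :
    frenetNat n γt 0 u = deriv γt u := by
  have h0 : (0:ℕ) < n := by omega
  rw [frenetNat, dif_pos h0]
  rw [frenetFam]
  have h0' : ((⟨0, h0⟩ : Fin n) : ℕ) < n - 1 := by simp; omega
  simp only [dif_pos h0']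
  rw [InnerProductSpace.gramSchmidtNormed]
  rw [aux_gs_zero (derivFam n γt u) (by omega)]
  rw [aux_derivFam_zero hn, hunit u]
  norm_num

lemma aux_frenetNat_one {n : ℕ} (hn : 3 ≤ n) (γt : ℝ → EuclideanSpace ℝ (Fin n))
    (hγt : ContDiff ℝ (⊤ : ℕ∞) γt) (hunit : ∀ u : ℝ, ‖deriv γt u‖ = 1) (u : ℝ) :
    frenetNat n γt 1 u = ‖deriv (deriv γt) u‖⁻¹ • deriv (deriv γt) u := by
  have h1 : (1:ℕ) < n := by omega
  rw [frenetNat, dif_pos h1]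
  rw [frenetFam]
  have h1' : ((⟨1, h1⟩ : Fin n) : ℕ) < n - 1 := by simp; omega
  simp only [dif_pos h1']
  rw [InnerProductSpace.gramSchmidtNormed]
  rw [aux_gs_one (derivFam n γt u) (by omega)
    (by rw [aux_derivFam_zero hn, aux_derivFam_one hn]; exact aux_orth hγt hunit u)]
  rw [aux_derivFam_one hn]
  norm_num

/-- For a curve of order `n-1` in `ℝⁿ` with `n ≥ 3`, the first generalized curvature
(defined via an arclength reparametrization `γ = γ̃ ∘ s`) is
`κ₁(t) = √(det M₂(t)) / ‖γ'(t)‖³`. -/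
theorem curv_one_formula (n : ℕ) (hn : 3 ≤ n) (γ γt : ℝ → EuclideanSpace ℝ (Fin n))
    (s : ℝ → ℝ)
    (hγ : ContDiff ℝ (⊤ : ℕ∞) γ) (hγt : ContDiff ℝ (⊤ : ℕ∞) γt) (hs : ContDiff ℝ (⊤ : ℕ∞) s)
    (hmono : StrictMono s) (hunit : ∀ u : ℝ, ‖deriv γt u‖ = 1)
    (hrepar : ∀ t : ℝ, γ t = γt (s t)) (hs' : ∀ t : ℝ, deriv s t = ‖deriv γ t‖)
    (horder : HasOrder n γ) :
    ∀ t : ℝ, curv n γt 1 (s t) = Real.sqrt (gramMinor n γ 2 t) / ‖deriv γ t‖ ^ 3 := by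
  intro t
  -- notation
  set a := deriv s t with ha
  set T := deriv γt (s t) with hT
  set K := deriv (deriv γt) (s t) with hK
  set b := deriv (deriv s) t with hb
  -- basic differentiability
  have hsd : Differentiable ℝ s := hs.differentiable (by simp)
  have hs2 : Differentiable ℝ (deriv s) :=
    ((contDiff_infty_iff_deriv.mp (hs.of_le (by simp))).2).differentiable (by simp)
  have hγtd : Differentiable ℝ γt := hγt.differentiable (by simp)
  have hγt2 : Differentiable ℝ (deriv γt) :=
    ((contDiff_infty_iff_deriv.mp (hγt.of_le (by simp))).2).differentiable (by simp)
  -- first derivative of γ (at every point)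
  have hDγ : ∀ u : ℝ, HasDerivAt γ (deriv s u • deriv γt (s u)) u := by
    intro u
    have h := HasDerivAt.scomp (𝕜 := ℝ) (𝕜' := ℝ) u ((hγtd (s u)).hasDerivAt) ((hsd u).hasDerivAt)
    have hfun : γt ∘ s = γ := by funext v; exact (hrepar v).symm
    rwa [hfun] at h
  have hderivγ : deriv γ = fun u => deriv s u • deriv γt (s u) :=
    funext fun u => (hDγ u).deriv
  have hd1 : deriv γ t = a • T := by rw [hderivγ]
  -- second derivative of γ at t
  have hd2 : deriv (deriv γ) t = b • T + (a * a) • K := by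
    rw [hderivγ]
    have hc : HasDerivAt (deriv s) b t := (hs2 t).hasDerivAt
    have hf : HasDerivAt (fun u => deriv γt (s u)) (a • K) t := by
      have h := HasDerivAt.scomp (𝕜 := ℝ) (𝕜' := ℝ) t
        ((hγt2 (s t)).hasDerivAt) ((hsd t).hasDerivAt)
      exact h
    have h2 := (HasDerivAt.smul (𝕜 := ℝ) hc hf).deriv
    rw [show (fun u => deriv s u • deriv γt (s u)) = (deriv s • fun u => deriv γt (s u)) from rfl, h2]
    module
  -- inner product facts
  have hTT : ⟪T, T⟫ = 1 := by
    rw [real_inner_self_eq_norm_mul_norm, hT, hunit]; norm_num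
  have hTK : ⟪T, K⟫ = 0 := aux_orth hγt hunit (s t)
  have hKT : ⟪K, T⟫ = 0 := by rw [real_inner_comm]; exact hTK
  -- a > 0
  have hγ'ne : deriv γ t ≠ 0 := by
    have h := (horder t).ne_zero ⟨0, by omega⟩
    rwa [aux_derivFam_zero hn] at h
  have hapos : 0 < a := by
    rw [ha, hs' t]
    exact norm_pos_iff.mpr hγ'ne
  -- K ≠ 0
  have hKne : K ≠ 0 := by
    intro hK0
    have hgpair : LinearIndependent ℝ
        (fun k : Fin 2 => derivFam n γ t (Fin.castLE (by omega) k)) :=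
      (horder t).comp _ (Fin.castLE_injective _)
    have hg0 : derivFam n γ t (Fin.castLE (by omega : 2 ≤ n - 1) 0) = deriv γ t := by
      rw [show (Fin.castLE (by omega : 2 ≤ n - 1) 0) = (⟨0, by omega⟩ : Fin (n-1)) from rfl]
      exact aux_derivFam_zero hn γ t
    have hg1 : derivFam n γ t (Fin.castLE (by omega : 2 ≤ n - 1) 1) = deriv (deriv γ) t := by
      rw [show (Fin.castLE (by omega : 2 ≤ n - 1) 1) = (⟨1, by omega⟩ : Fin (n-1)) from rfl]
      exact aux_derivFam_one hn γ t
    have heq : (fun k : Fin 2 => derivFam n γ t (Fin.castLE (by omega) k))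
        = ![deriv γ t, deriv (deriv γ) t] := by
      funext i
      fin_cases i
      · simpa using hg0
      · simpa using hg1
    rw [heq] at hgpair
    obtain ⟨h1, h2⟩ := linearIndependent_fin2.mp hgpair
    -- deriv (deriv γ) t = (b / a) • deriv γ t
    have hrel : deriv (deriv γ) t = (b / a) • deriv γ t := by
      rw [hd2, hK0, smul_zero, add_zero, hd1, smul_smul]
      congr 1
      field_simp
    simp only [Matrix.cons_val_one, Matrix.head_cons, Matrix.cons_val_zero] at h1 h2
    by_cases hb0 : b = 0
    · exact h1 (by rw [hrel, hb0, zero_div, zero_smul])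
    · have : deriv γ t = (a / b) • deriv (deriv γ) t := by
        rw [hrel, smul_smul]
        field_simp
        rw [one_smul]
      exact h2 (a / b) this.symm
  have hKnorm : (0:ℝ) < ‖K‖ := norm_pos_iff.mpr hKne
  -- LHS
  have hLHS : curv n γt 1 (s t) = ‖K‖ := by
    rw [curv]
    have hfun : (fun u => frenetNat n γt (1 - 1) u) = deriv γt := by
      funext u
      simpa using aux_frenetNat_zero hn γt hunit u
    rw [hfun, aux_frenetNat_one hn γt hγt hunit]
    rw [real_inner_smul_right, ← hK, real_inner_self_eq_norm_mul_norm]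
    field_simp
  -- gramMinor computation
  have hit1 : iteratedDeriv (0 + 1) γ t = a • T := by
    rw [zero_add, iteratedDeriv_one, hd1]
  have hit2 : iteratedDeriv (1 + 1) γ t = b • T + (a * a) • K := by
    rw [iteratedDeriv_succ, iteratedDeriv_one, hd2]
  have hKK : ⟪K, K⟫ = ‖K‖ * ‖K‖ := real_inner_self_eq_norm_mul_norm K
  have hgm : gramMinor n γ 2 t = (a ^ 3 * ‖K‖) ^ 2 := by
    rw [gramMinor, Matrix.det_fin_two]
    simp only [Matrix.of_apply, Fin.val_zero, Fin.val_one, hit1, hit2,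
      inner_add_left, inner_add_right, real_inner_smul_left, real_inner_smul_right,
      hTT, hTK, hKT, hKK]
    ring
  rw [hLHS, hgm, Real.sqrt_sq (by positivity)]
  have hnorm : ‖deriv γ t‖ = a := (hs' t).symm
  rw [hnorm, mul_comm, mul_div_assoc, div_self (by positivity), mul_one]
end
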